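/- Backward lightcone decomposition: For a layered circuit E = E_d ∘ ⋯ ∘ E₁ of gates on a finite set Λ of sites and any region S ⊆ Λ, the full circuit factorizes as E = Q ∘ B_{S̄}, where B_{S̄} is the backward lightcone of the complement S̄ and Q = B_S \ B_{S̄} is a sub-circuit consisting of the remaining gates, and Supp(Q) ⊆ S. -/

import Mathlib

/-!
A gate outside the backward lightcone of `Sᶜ` misses `Sᶜ`, so its support lies in `S`.
To move the lightcone gates to the start of the circuit it suffices that each lightcone gate `g`
commutes with every non-lightcone gate `h` below it. If their supports met, then either `h` lies
in a strictly lower layer, and would itself be in the lightcone, or they share a layer, where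
distinct gates are disjoint.
-/

/-- A gate `g` is in the backward lightcone of the region `T` (Definition 1):
either its support meets `T`, or it meets the support of a lightcone gate in a
strictly higher layer. -/
inductive InCone {G Λ : Type*} (layer : G → ℕ) (supp : G → Set Λ) (T : Set Λ) : G → Prop
  | base (g : G) : (supp g ∩ T).Nonempty → InCone layer supp T g
  | step (g h : G) : InCone layer supp T h → layer g < layer h →
      (supp g ∩ supp h).Nonempty → InCone layer supp T g

/-- Apply a list of gates, the head of the list acting last. -/
def applyGates {V G : Type*} (ch : G → V → V) : List G → V → V
  | [], x => x
  | g :: l, x => ch g (applyGates ch l x)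

section applyGates

variable {V G : Type*} (ch : G → V → V)

theorem applyGates_comm_of_forall_mem (g : G) (l : List G)
    (hcomm : ∀ h ∈ l, ∀ x, ch g (ch h x) = ch h (ch g x)) (x : V) :
    ch g (applyGates ch l x) = applyGates ch l (ch g x) := by
  induction l with
  | nil => rfl
  | cons h l ih =>
    simp only [List.forall_mem_cons] at hcomm
    simp only [applyGates, hcomm.1, ih hcomm.2]

theorem applyGates_eq_filter_not_comp_filter (P : G → Prop) [DecidablePred P] (L : List G)
    (hcomm : L.Pairwise fun g h => P g → ¬ P h → ∀ x, ch g (ch h x) = ch h (ch g x))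
    (x : V) :
    applyGates ch L x =
      applyGates ch (L.filter fun g => decide (¬ P g))
        (applyGates ch (L.filter fun g => decide (P g)) x) := by
  induction L with
  | nil => rfl
  | cons g l ih =>
    obtain ⟨hg, hl⟩ := List.pairwise_cons.mp hcomm
    by_cases hPg : P g
    · have hcomm_g : ∀ h ∈ l.filter (fun g => decide (¬ P g)),
          ∀ x, ch g (ch h x) = ch h (ch g x) := fun h hh =>
        hg h (List.mem_of_mem_filter hh) hPg (by simpa using List.of_mem_filter hh)
      simp only [List.filter_cons, hPg, applyGates, ih hl, decide_true, decide_false, not_true,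
        if_true, Bool.false_eq_true, if_false]
      exact applyGates_comm_of_forall_mem ch g _ hcomm_g _
    · simp [hPg, applyGates, ih hl]

end applyGates

section InCone

variable {G Λ : Type*} {layer : G → ℕ} {supp : G → Set Λ}

theorem InCone.disjoint_of_not_inCone
    (hlayerdisj : ∀ g h : G, g ≠ h → layer g = layer h → Disjoint (supp g) (supp h))
    {T : Set Λ} {g h : G} (hg : InCone layer supp T g) (hh : ¬ InCone layer supp T h)
    (hne : g ≠ h) (hle : layer h ≤ layer g) : Disjoint (supp g) (supp h) := by
  by_contra hmeet
  rw [Set.not_disjoint_iff_nonempty_inter, Set.inter_comm] at hmeet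
  rcases hle.lt_or_eq with hlt | heq
  · exact hh (InCone.step h g hg hlt hmeet)
  · exact hmeet.not_disjoint (hlayerdisj h g hne.symm heq)

theorem supp_subset_of_not_inCone_compl {S : Set Λ} {g : G}
    (hg : ¬ InCone layer supp Sᶜ g) : supp g ⊆ S := fun x hx =>
  by_contra fun hxS => hg (InCone.base g ⟨x, hx, hxS⟩)

end InCone

open scoped Classical in
theorem stmt16_general {V Λ G : Type*}
    (layer : G → ℕ) (supp : G → Set Λ) (ch : G → V → V)
    (hcomm : ∀ g h : G, Disjoint (supp g) (supp h) →
      ∀ x, ch g (ch h x) = ch h (ch g x))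
    (hlayerdisj : ∀ g h : G, g ≠ h → layer g = layer h → Disjoint (supp g) (supp h))
    (S : Set Λ)
    (L : List G) (hLnodup : L.Nodup)
    (hLsorted : L.Pairwise fun a b => layer b ≤ layer a) :
    (∀ x : V,
        applyGates ch L x =
          applyGates ch (L.filter fun g => decide (¬ InCone layer supp Sᶜ g))
            (applyGates ch (L.filter fun g => decide (InCone layer supp Sᶜ g)) x)) ∧
    (∀ g : G, ¬ InCone layer supp Sᶜ g → supp g ⊆ S) := by
  refine ⟨applyGates_eq_filter_not_comp_filter ch _ L ?_,
    fun _ => supp_subset_of_not_inCone_compl⟩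
  refine ((List.nodup_iff_pairwise_ne.mp hLnodup).and hLsorted).imp ?_
  rintro g h ⟨hne, hle⟩ hg hh
  exact hcomm g h (hg.disjoint_of_not_inCone hlayerdisj hh hne hle)

open scoped Classical in
/-- Fact 2 (backward lightcone decomposition): for a layered circuit `E` (given
as a list `L` of gates in layer-descending order, gates in the same layer having
disjoint supports, disjointly-supported gates commuting), the circuit factors as
`E = Q ∘ B_{S̄}` where `B_{S̄}` consists of the gates in the backward lightcone of
`Sᶜ` and `Q` of the remaining gates, and every gate of `Q` has support inside `S`. -/
theorem stmt16 {V Λ G : Type*}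
    (layer : G → ℕ) (supp : G → Set Λ) (ch : G → V → V)
    (hcomm : ∀ g h : G, Disjoint (supp g) (supp h) →
      ∀ x, ch g (ch h x) = ch h (ch g x))
    (hlayerdisj : ∀ g h : G, g ≠ h → layer g = layer h → Disjoint (supp g) (supp h))
    (S : Set Λ)
    (L : List G) (hLall : ∀ g : G, g ∈ L) (hLnodup : L.Nodup)
    (hLsorted : L.Pairwise fun a b => layer b ≤ layer a) :
    (∀ x : V,
        applyGates ch L x =
          applyGates ch (L.filter fun g => decide (¬ InCone layer supp Sᶜ g))
            (applyGates ch (L.filter fun g => decide (InCone layer supp Sᶜ g)) x)) ∧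
    (∀ g : G, ¬ InCone layer supp Sᶜ g → supp g ⊆ S) :=
  stmt16_general layer supp ch hcomm hlayerdisj S L hLnodup hLsorted
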